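/- Let (μ_α) be a sequence of positive reals with Σ_α μ_α < ∞, and let C_α be the Toeplitz matrices (with C_α quadratic form bounded by 8^α on the unit polydisc, all entries of modulus 1). Then the quadratic form C(x) = Σ_{α=1}^∞ (μ_α / 8^α) C_α applied to consecutive blocks of variables of lengths 4, 4², 4³, … is completely bounded on the closed unit polydisc 𝒮: all its rectangular partial sums are bounded in modulus by a constant (e.g. by 2 Σ_α μ_α). -/

import Mathlib

/-!
Inside the `α`-th block the form is `μ_α / 8^{α+1}` times the bilinear form of `C_{α+1}`, a
`±1` matrix of size `n = 4^{α+1}` whose rows are orthogonal of squared length `n`. By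
Cauchy–Schwarz and this orthogonality its bilinear form is at most `n · √n = 8^{α+1}` on the
polydisc, so each block contributes at most `μ_α`. Different blocks do not interact, and a
rectangular partial sum is a square partial sum over whole blocks of the truncated vectors
`x·1_{[0,M)}` and `x·1_{[0,N)}`, which stay in the polydisc; hence it is at most `∑ μ_α`.
-/

open Filter Topology

/-- Toeplitz's matrices: `toepT 1` is the `4 × 4` matrix with `-1` on the diagonal and `1`
off it, and `toepT (α+1)` is the `4 × 4` block matrix with blocks `-toepT α` on the
diagonal and `toepT α` off it; the index set of `toepT α` is `Fin α → Fin 4`. -/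
def toepT : (α : ℕ) → Matrix (Fin α → Fin 4) (Fin α → Fin 4) ℝ
  | 0 => 1
  | (α + 1) => fun i j =>
      (if i 0 = j 0 then (-1 : ℝ) else 1) *
        toepT α (fun k => i k.succ) (fun k => j k.succ)

/-- `blockStart α` is the index in `ℕ` where the `α`-th block (of length `4^{α+1}`,
`α = 0, 1, 2, …`, corresponding to the paper's blocks of lengths `4, 4², 4³, …`) starts. -/
def blockStart (α : ℕ) : ℕ := ∑ β ∈ Finset.range α, 4 ^ (β + 1)

attribute [local instance] Classical.propDecidable

/-- The coefficients of Toeplitz's quadratic form `C(x) = ∑_α (μ_α / 8^{α+1}) C_{α+1}`,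
applied to consecutive blocks of variables of lengths `4, 4², 4³, …`:
`a_{mn} = (μ_α / 8^{α+1}) (C_{α+1})_{rs}` when `m, n` both lie in the `α`-th block (with
relative positions `r, s`), and `a_{mn} = 0` otherwise. -/
noncomputable def toepCoef (μ : ℕ → ℝ) (m n : ℕ) : ℝ :=
  if h : ∃ α, (blockStart α ≤ m ∧ m < blockStart (α + 1)) ∧
      (blockStart α ≤ n ∧ n < blockStart (α + 1)) then
    (μ h.choose / 8 ^ (h.choose + 1)) *
      toepT (h.choose + 1)
        (finFunctionFinEquiv.symm ⟨m - blockStart h.choose, by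
          obtain ⟨⟨h1, h2⟩, h3, h4⟩ := h.choose_spec
          have e : blockStart (h.choose + 1) = blockStart h.choose + 4 ^ (h.choose + 1) :=
            Finset.sum_range_succ _ _
          omega⟩)
        (finFunctionFinEquiv.symm ⟨n - blockStart h.choose, by
          obtain ⟨⟨h1, h2⟩, h3, h4⟩ := h.choose_spec
          have e : blockStart (h.choose + 1) = blockStart h.choose + 4 ^ (h.choose + 1) :=
            Finset.sum_range_succ _ _
          omega⟩)
  else 0

open Matrix

section Hadamard

variable {𝕜 ι : Type*} [RCLike 𝕜] [Fintype ι] [DecidableEq ι]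

lemma sum_norm_sq_sum_mul_eq_of_mul_transpose {A : Matrix ι ι ℝ} {c : ℝ}
    (hA : A * Aᵀ = c • 1) (x : ι → 𝕜) :
    ∑ j, ‖∑ i, (A i j : 𝕜) * x i‖ ^ 2 = c * ∑ i, ‖x i‖ ^ 2 := by
  have hrow : ∀ i k, ∑ j, (A i j : 𝕜) * A k j = if i = k then (c : 𝕜) else 0 := by
    intro i k
    have := congrArg ((↑) : ℝ → 𝕜) (congrFun₂ hA i k)
    simpa [Matrix.mul_apply, Matrix.one_apply, apply_ite] using this
  apply RCLike.ofReal_injective (K := 𝕜)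
  push_cast
  simp only [← RCLike.mul_conj, map_sum, map_mul, RCLike.conj_ofReal]
  calc ∑ j, (∑ i, (A i j : 𝕜) * x i) * ∑ k, (A k j : 𝕜) * (starRingEnd 𝕜) (x k)
      = ∑ i, ∑ k, (∑ j, (A i j : 𝕜) * A k j) * (x i * (starRingEnd 𝕜) (x k)) := by
        simp only [Finset.sum_mul_sum]
        simp only [Finset.sum_mul]
        exact Finset.sum_comm.trans <| Finset.sum_congr rfl fun i _ => Finset.sum_comm.trans <|
          Finset.sum_congr rfl fun k _ => Finset.sum_congr rfl fun j _ => by ring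
    _ = c * ∑ i, x i * (starRingEnd 𝕜) (x i) := by
        simp only [hrow, ite_mul, zero_mul, Finset.sum_ite_eq, Finset.mem_univ, if_true,
          Finset.mul_sum]

lemma norm_sum_sum_mul_sq_le_of_mul_transpose {A : Matrix ι ι ℝ} {c : ℝ}
    (hA : A * Aᵀ = c • 1) (hc : 0 ≤ c) {x y : ι → 𝕜} (hx : ∀ i, ‖x i‖ ≤ 1) (hy : ∀ j, ‖y j‖ ≤ 1) :
    ‖∑ i, ∑ j, (A i j : 𝕜) * x i * y j‖ ^ 2 ≤ c * Fintype.card ι ^ 2 := by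
  set u : ι → 𝕜 := fun j => ∑ i, (A i j : 𝕜) * x i
  have hform : ∑ i, ∑ j, (A i j : 𝕜) * x i * y j = ∑ j, u j * y j := by
    rw [Finset.sum_comm]
    simp only [u, Finset.sum_mul]
  have hl1 : ‖∑ j, u j * y j‖ ≤ ∑ j, ‖u j‖ :=
    (norm_sum_le _ _).trans <| Finset.sum_le_sum fun j _ => by
      rw [norm_mul]; exact mul_le_of_le_one_right (norm_nonneg _) (hy j)
  have hx2 : ∑ i, ‖x i‖ ^ 2 ≤ Fintype.card ι := by
    simpa using Finset.sum_le_sum fun i (_ : i ∈ Finset.univ) =>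
      pow_le_one₀ (n := 2) (norm_nonneg (x i)) (hx i)
  calc ‖∑ i, ∑ j, (A i j : 𝕜) * x i * y j‖ ^ 2
      ≤ (∑ j, ‖u j‖) ^ 2 := by rw [hform]; exact pow_le_pow_left₀ (norm_nonneg _) hl1 2
    _ ≤ Fintype.card ι * ∑ j, ‖u j‖ ^ 2 := sq_sum_le_card_mul_sum_sq
    _ = Fintype.card ι * (c * ∑ i, ‖x i‖ ^ 2) := by
        rw [sum_norm_sq_sum_mul_eq_of_mul_transpose hA]
    _ ≤ c * Fintype.card ι ^ 2 := by
        have := mul_le_mul_of_nonneg_left hx2 hc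
        nlinarith [Nat.cast_nonneg (α := ℝ) (Fintype.card ι)]

end Hadamard

lemma toepT_succ_apply (α : ℕ) (i j : Fin (α + 1) → Fin 4) :
    toepT (α + 1) i j = (if i 0 = j 0 then -1 else 1) * toepT α (Fin.tail i) (Fin.tail j) :=
  rfl

lemma sum_sign_mul_sign (a b : Fin 4) :
    ∑ c : Fin 4, (if a = c then (-1 : ℝ) else 1) * (if b = c then -1 else 1) =
      if a = b then 4 else 0 := by
  rw [Fin.sum_univ_four]
  fin_cases a <;> fin_cases b <;> norm_num [Fin.ext_iff]

lemma sum_toepT_mul_toepT (α : ℕ) (i j : Fin α → Fin 4) :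
    ∑ k, toepT α i k * toepT α j k = if i = j then 4 ^ α else 0 := by
  induction α with
  | zero =>
    obtain rfl := Subsingleton.elim i j
    rw [Fintype.sum_subsingleton _ i]
    simp [toepT]
  | succ α ih =>
    simp only [toepT_succ_apply]
    rw [← (Fin.consEquiv fun _ => Fin 4).sum_comp, Fintype.sum_prod_type]
    simp only [Fin.consEquiv_apply, Fin.cons_zero]
    have hij : i = j ↔ i 0 = j 0 ∧ Fin.tail i = Fin.tail j :=
      ⟨fun h => h ▸ ⟨rfl, rfl⟩, fun ⟨h0, ht⟩ => by
        rw [← Fin.cons_self_tail i, ← Fin.cons_self_tail j, h0, ht]⟩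
    calc ∑ c, ∑ k, (if i 0 = c then (-1 : ℝ) else 1) * toepT α (Fin.tail i) k *
          ((if j 0 = c then -1 else 1) * toepT α (Fin.tail j) k)
        = (∑ c : Fin 4, (if i 0 = c then (-1 : ℝ) else 1) * (if j 0 = c then -1 else 1)) *
            ∑ k, toepT α (Fin.tail i) k * toepT α (Fin.tail j) k := by
          rw [Finset.sum_mul_sum]
          exact Finset.sum_congr rfl fun c _ => Finset.sum_congr rfl fun k _ => by ring
      _ = if i = j then 4 ^ (α + 1) else 0 := by
          rw [sum_sign_mul_sign, ih]
          by_cases h0 : i 0 = j 0 <;> by_cases ht : Fin.tail i = Fin.tail j <;>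
            simp [hij, h0, ht, pow_succ']

lemma toepT_mul_transpose (α : ℕ) : toepT α * (toepT α)ᵀ = (4 ^ α : ℝ) • 1 := by
  ext i j
  simpa [Matrix.mul_apply, Matrix.one_apply] using sum_toepT_mul_toepT α i j

lemma norm_sum_toepT_mul_le {𝕜 : Type*} [RCLike 𝕜] (α : ℕ) {x y : (Fin α → Fin 4) → 𝕜}
    (hx : ∀ i, ‖x i‖ ≤ 1) (hy : ∀ j, ‖y j‖ ≤ 1) :
    ‖∑ i, ∑ j, (toepT α i j : 𝕜) * x i * y j‖ ≤ 8 ^ α := by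
  refine le_of_pow_le_pow_left₀ two_ne_zero (by positivity) ?_
  calc ‖∑ i, ∑ j, (toepT α i j : 𝕜) * x i * y j‖ ^ 2
      ≤ 4 ^ α * Fintype.card (Fin α → Fin 4) ^ 2 :=
        norm_sum_sum_mul_sq_le_of_mul_transpose (toepT_mul_transpose α) (by positivity) hx hy
    _ = (8 ^ α) ^ 2 := by
        rw [Fintype.card_fun, Fintype.card_fin, Fintype.card_fin]
        push_cast
        rw [← pow_mul, ← pow_mul, mul_comm α 2, pow_mul, pow_mul, ← mul_pow]
        norm_num

lemma blockStart_succ (α : ℕ) : blockStart (α + 1) = blockStart α + 4 ^ (α + 1) :=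
  Finset.sum_range_succ _ _

lemma blockStart_strictMono : StrictMono blockStart :=
  strictMono_nat_of_lt_succ fun α => by
    rw [blockStart_succ]
    exact Nat.lt_add_of_pos_right (by positivity)

lemma eq_of_mem_block {α β m : ℕ} (hα : blockStart α ≤ m ∧ m < blockStart (α + 1))
    (hβ : blockStart β ≤ m ∧ m < blockStart (β + 1)) : α = β := by
  have h₁ := blockStart_strictMono.lt_iff_lt.1 (hα.1.trans_lt hβ.2)
  have h₂ := blockStart_strictMono.lt_iff_lt.1 (hβ.1.trans_lt hα.2)
  omega

def blockIndex (α : ℕ) (i : Fin (α + 1) → Fin 4) : ℕ :=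
  blockStart α + finFunctionFinEquiv i

lemma blockIndex_mem_block (α : ℕ) (i : Fin (α + 1) → Fin 4) :
    blockStart α ≤ blockIndex α i ∧ blockIndex α i < blockStart (α + 1) := by
  have := (finFunctionFinEquiv i).2
  rw [blockIndex, blockStart_succ]
  omega

lemma sum_Ico_blockStart {M : Type*} [AddCommMonoid M] (α : ℕ) (g : ℕ → M) :
    ∑ m ∈ Finset.Ico (blockStart α) (blockStart (α + 1)), g m = ∑ i, g (blockIndex α i) := by
  rw [blockStart_succ, Finset.sum_Ico_eq_sum_range, Nat.add_sub_cancel_left,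
    ← Fin.sum_univ_eq_sum_range]
  exact (finFunctionFinEquiv.sum_comp fun k => g (blockStart α + k)).symm

lemma sum_range_blockStart {M : Type*} [AddCommMonoid M] (L : ℕ) (g : ℕ → M) :
    ∑ m ∈ Finset.range (blockStart L), g m =
      ∑ α ∈ Finset.range L, ∑ m ∈ Finset.Ico (blockStart α) (blockStart (α + 1)), g m := by
  induction L with
  | zero => simp [blockStart]
  | succ L ih =>
    rw [Finset.sum_range_succ, ← ih, Finset.range_eq_Ico, Finset.range_eq_Ico,
      Finset.sum_Ico_consecutive _ (Nat.zero_le _) (blockStart_strictMono.monotone L.le_succ)]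

lemma toepCoef_blockIndex (μ : ℕ → ℝ) (α : ℕ) (i j : Fin (α + 1) → Fin 4) :
    toepCoef μ (blockIndex α i) (blockIndex α j) = μ α / 8 ^ (α + 1) * toepT (α + 1) i j := by
  have hi := blockIndex_mem_block α i
  have hj := blockIndex_mem_block α j
  generalize hm : blockIndex α i = m at hi
  generalize hn : blockIndex α j = n at hj
  have h : ∃ β, (blockStart β ≤ m ∧ m < blockStart (β + 1)) ∧
      (blockStart β ≤ n ∧ n < blockStart (β + 1)) := ⟨α, hi, hj⟩
  have hα : h.choose = α := eq_of_mem_block h.choose_spec.1 hi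
  rw [toepCoef, dif_pos h]
  subst hα
  rw [blockIndex] at hm hn
  congr 2 <;> rw [Equiv.symm_apply_eq, Fin.ext_iff, Fin.val_mk] <;> omega

lemma toepCoef_eq_zero_of_ne (μ : ℕ → ℝ) {α β m n : ℕ} (hαβ : α ≠ β)
    (hm : blockStart α ≤ m ∧ m < blockStart (α + 1))
    (hn : blockStart β ≤ n ∧ n < blockStart (β + 1)) :
    toepCoef μ m n = 0 := by
  rw [toepCoef, dif_neg]
  rintro ⟨γ, hγm, hγn⟩
  exact hαβ ((eq_of_mem_block hm hγm).trans (eq_of_mem_block hγn hn))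

lemma sum_toepCoef_blockStart (μ : ℕ → ℝ) (L : ℕ) (z w : ℕ → ℂ) :
    ∑ m ∈ Finset.range (blockStart L), ∑ n ∈ Finset.range (blockStart L),
        (toepCoef μ m n : ℂ) * z m * w n =
      ∑ α ∈ Finset.range L, ((μ α / 8 ^ (α + 1) : ℝ) : ℂ) *
        ∑ i, ∑ j, (toepT (α + 1) i j : ℂ) * z (blockIndex α i) * w (blockIndex α j) := by
  rw [sum_range_blockStart]
  refine Finset.sum_congr rfl fun α hα => ?_
  have hdiag : ∀ m ∈ Finset.Ico (blockStart α) (blockStart (α + 1)),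
      ∑ n ∈ Finset.range (blockStart L), (toepCoef μ m n : ℂ) * z m * w n =
        ∑ n ∈ Finset.Ico (blockStart α) (blockStart (α + 1)), (toepCoef μ m n : ℂ) * z m * w n := by
    intro m hm
    rw [sum_range_blockStart, Finset.sum_eq_single_of_mem α hα]
    intro β _ hβα
    refine Finset.sum_eq_zero fun n hn => ?_
    rw [toepCoef_eq_zero_of_ne μ (Ne.symm hβα) (Finset.mem_Ico.1 hm) (Finset.mem_Ico.1 hn)]
    simp
  rw [Finset.sum_congr rfl hdiag, sum_Ico_blockStart, Finset.mul_sum]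
  refine Finset.sum_congr rfl fun i _ => ?_
  rw [sum_Ico_blockStart, Finset.mul_sum]
  refine Finset.sum_congr rfl fun j _ => ?_
  rw [toepCoef_blockIndex]
  push_cast
  ring

lemma norm_sum_toepCoef_blockStart_le {μ : ℕ → ℝ} (hμ : ∀ α, 0 ≤ μ α) (L : ℕ) {z w : ℕ → ℂ}
    (hz : ∀ m, ‖z m‖ ≤ 1) (hw : ∀ n, ‖w n‖ ≤ 1) :
    ‖∑ m ∈ Finset.range (blockStart L), ∑ n ∈ Finset.range (blockStart L),
        (toepCoef μ m n : ℂ) * z m * w n‖ ≤ ∑ α ∈ Finset.range L, μ α := by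
  rw [sum_toepCoef_blockStart]
  refine (norm_sum_le _ _).trans (Finset.sum_le_sum fun α _ => ?_)
  have hcoef : 0 ≤ μ α / 8 ^ (α + 1) := by have := hμ α; positivity
  rw [norm_mul, Complex.norm_real, Real.norm_of_nonneg hcoef]
  calc μ α / 8 ^ (α + 1) * ‖∑ i, ∑ j, (toepT (α + 1) i j : ℂ) * z (blockIndex α i) *
        w (blockIndex α j)‖
      ≤ μ α / 8 ^ (α + 1) * 8 ^ (α + 1) :=
        mul_le_mul_of_nonneg_left (norm_sum_toepT_mul_le _ (fun _ => hz _) fun _ => hw _) hcoef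
    _ = μ α := div_mul_cancel₀ _ (by positivity)

lemma sum_range_sum_range_eq_indicator {R : Type*} [CommSemiring R] (a : ℕ → ℕ → R) (x : ℕ → R)
    {M N K : ℕ} (hM : M ≤ K) (hN : N ≤ K) :
    ∑ m ∈ Finset.range M, ∑ n ∈ Finset.range N, a m n * x m * x n =
      ∑ m ∈ Finset.range K, ∑ n ∈ Finset.range K,
        a m n * (Set.Iio M).indicator x m * (Set.Iio N).indicator x n := by
  symm
  refine (Finset.sum_subset (Finset.range_subset_range.2 hM) fun m _ hm => ?_).symm.trans
    (Finset.sum_congr rfl fun m hm => ?_)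
  · refine Finset.sum_eq_zero fun n _ => ?_
    rw [Set.indicator_of_notMem (s := Set.Iio M) (by simpa using hm), mul_zero, zero_mul]
  refine (Finset.sum_subset (Finset.range_subset_range.2 hN) fun n _ hn => ?_).symm.trans
    (Finset.sum_congr rfl fun n hn => ?_)
  · rw [Set.indicator_of_notMem (s := Set.Iio N) (by simpa using hn), mul_zero]
  rw [Set.indicator_of_mem (s := Set.Iio M) (by simpa using hm),
    Set.indicator_of_mem (s := Set.Iio N) (by simpa using hn)]

/-- If `μ_α > 0` and `∑ μ_α < ∞`, then Toeplitz's quadratic form is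
completely bounded on the closed unit polydisc `𝒮`: all its rectangular partial sums are
bounded in modulus by `2 ∑_α μ_α`. -/
theorem statement15 (μ : ℕ → ℝ) (hpos : ∀ α, 0 < μ α) (hsum : Summable μ)
    (M N : ℕ) (x : ℕ → ℂ) (hx : ∀ n, ‖x n‖ ≤ 1) :
    ‖∑ m ∈ Finset.range M, ∑ n ∈ Finset.range N, (toepCoef μ m n : ℂ) * x m * x n‖ ≤
      2 * ∑' α, μ α := by
  have hμ : ∀ α, 0 ≤ μ α := fun α => (hpos α).le
  have hle_blockStart : ∀ k ≤ M + N, k ≤ blockStart (M + N) :=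
    fun k hk => hk.trans (blockStart_strictMono.id_le _)
  have hindicator : ∀ s : Set ℕ, ∀ n, ‖s.indicator x n‖ ≤ 1 := fun s n =>
    (norm_indicator_le_norm_self x n).trans (hx n)
  calc ‖∑ m ∈ Finset.range M, ∑ n ∈ Finset.range N, (toepCoef μ m n : ℂ) * x m * x n‖
      = ‖∑ m ∈ Finset.range (blockStart (M + N)), ∑ n ∈ Finset.range (blockStart (M + N)),
          (toepCoef μ m n : ℂ) * (Set.Iio M).indicator x m * (Set.Iio N).indicator x n‖ := by
        rw [sum_range_sum_range_eq_indicator _ _ (hle_blockStart M (by omega))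
          (hle_blockStart N (by omega))]
    _ ≤ ∑ α ∈ Finset.range (M + N), μ α :=
        norm_sum_toepCoef_blockStart_le hμ _ (hindicator _) (hindicator _)
    _ ≤ ∑' α, μ α := hsum.sum_le_tsum _ fun α _ => hμ α
    _ ≤ 2 * ∑' α, μ α := by linarith [(tsum_nonneg hμ : 0 ≤ ∑' α, μ α)]
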